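/- arXiv:1904.00341 — 5 statements merged into one kernel-verified Lean document; each statement's English description precedes it below -/
import Mathlib

section
/- For an absolutely integrable function μ supported in a compact convex set C ⊂ ℝ² and unit vector θ, the Radon transform restricted to direction θ is recovered by evaluating the cone beam transform along the lower boundary of C: (Rμ)(v,θ) = (Bμ)(f⁻_θ(v), θ) for all v ∈ [v⁻_θ, v⁺_θ], where f⁻_θ(v) = u⁻_θ(v)θ + vθ^⊥; moreover (Rμ)(v,θ) = 0 for v ∉ [v⁻_θ, v⁺_θ]. -/
open MeasureTheory Set

noncomputable section

/-- Dot product on `ℝ × ℝ`. -/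
def dot (x y : ℝ × ℝ) : ℝ := x.1 * y.1 + x.2 * y.2

/-- Counterclockwise rotation by `π/2`. -/
def perp (θ : ℝ × ℝ) : ℝ × ℝ := (-θ.2, θ.1)

/-- Cone beam transform `(Bμ)(x,θ) = ∫₀^∞ μ(x + tθ) dt`. -/
def cbt (μ : ℝ × ℝ → ℝ) (θ x : ℝ × ℝ) : ℝ := ∫ t in Ioi (0 : ℝ), μ (x + t • θ)

/-- Radon transform `(Rμ)(v,θ) = ∫_ℝ μ(vθ^⊥ + tθ) dt`. -/
def radon (μ : ℝ × ℝ → ℝ) (θ : ℝ × ℝ) (v : ℝ) : ℝ := ∫ t : ℝ, μ (v • perp θ + t • θ)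

/-- The Radon transform in direction `θ` is recovered from the cone beam transform
evaluated on the lower boundary `f⁻_θ(v) = u⁻_θ(v)θ + vθ^⊥`:
`(Rμ)(v,θ) = (Bμ)(f⁻_θ(v),θ)` for `v ∈ [v⁻_θ, v⁺_θ]`, and `(Rμ)(v,θ) = 0` otherwise. -/
theorem radon_eq_cbt_on_boundary
    (C : Set (ℝ × ℝ)) (hCcl : IsClosed C) (hCb : Bornology.IsBounded C)
    (hCconv : Convex ℝ C) (hCne : C.Nonempty)
    (μ : ℝ × ℝ → ℝ) (hμ : Integrable μ) (hsupp : ∀ x ∉ C, μ x = 0)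
    (θ : ℝ × ℝ) (hθ : θ.1 ^ 2 + θ.2 ^ 2 = 1)
    (vminus vplus : ℝ)
    (hvminus : IsLeast ((fun x => dot x (perp θ)) '' C) vminus)
    (hvplus : IsGreatest ((fun x => dot x (perp θ)) '' C) vplus)
    (uminus : ℝ → ℝ)
    (huminus : ∀ v ∈ Icc vminus vplus,
      IsLeast {t : ℝ | t • θ + v • perp θ ∈ C} (uminus v)) :
    (∀ v ∈ Icc vminus vplus,
        radon μ θ v = cbt μ θ (uminus v • θ + v • perp θ)) ∧
      (∀ v ∉ Icc vminus vplus, radon μ θ v = 0) := by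
  constructor
  · intro v hv
    obtain ⟨hmem, hlb⟩ := huminus v hv
    set a := uminus v with ha
    -- the line function
    set g : ℝ → ℝ := fun t => μ (v • perp θ + t • θ) with hg
    have hzero : ∀ t ∉ Ici a, g t = 0 := by
      intro t ht
      simp only [mem_Ici, not_le] at ht
      apply hsupp
      intro hC
      have : t ∈ {t : ℝ | t • θ + v • perp θ ∈ C} := by
        simpa [add_comm] using hC
      exact absurd (hlb this) (not_le.2 ht)
    have h1 : radon μ θ v = ∫ t in Ioi a, g t := by
      rw [radon, ← setIntegral_eq_integral_of_forall_compl_eq_zero hzero,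
        integral_Ici_eq_integral_Ioi]
    have h2 : cbt μ θ (a • θ + v • perp θ) = ∫ t in Ioi (0 : ℝ), g (t + a) := by
      rw [cbt]
      congr 1
      ext t
      rw [hg]
      congr 1
      module
    rw [h1, h2]
    have hMP : MeasurePreserving (fun x : ℝ => x + a) volume volume :=
      measurePreserving_add_right volume a
    have hemb : MeasurableEmbedding (fun x : ℝ => x + a) :=
      (MeasurableEquiv.addRight a).measurableEmbedding
    have := hMP.setIntegral_preimage_emb hemb g (Ioi a)
    rw [preimage_add_const_Ioi, sub_self] at this
    exact this.symm
  · intro v hv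
    rw [radon]
    have : ∀ t : ℝ, μ (v • perp θ + t • θ) = 0 := by
      intro t
      apply hsupp
      intro hC
      have hdot : dot (v • perp θ + t • θ) (perp θ) = v := by
        simp only [dot, perp, Prod.fst_add, Prod.snd_add, Prod.smul_fst, Prod.smul_snd,
          smul_eq_mul]
        linear_combination v * hθ
      apply hv
      constructor
      · have := hvminus.2 ⟨_, hC, rfl⟩
        simpa [hdot] using this
      · have := hvplus.2 ⟨_, hC, rfl⟩
        simpa [hdot] using this
    simp [this]
end
end

section
/- For an absolutely integrable function μ supported in a compact convex set C ⊂ ℝ² and unit vector θ, the cone beam transform agrees with the Radon transform on the union V⁻_θ ∪ C⁻_θ ∪ V⁺_θ: (Bμ)(x,θ) = (Rμ)(x·θ^⊥, θ) for all x in that union, where V⁻_θ = {x : x·θ^⊥ < v⁻_θ} and V⁺_θ = {x : x·θ^⊥ > v⁺_θ}. -/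
open MeasureTheory Set

noncomputable section

lemma key_shift (g : ℝ → ℝ) (a : ℝ) (h : ∀ s ≤ a, g s = 0) :
    ∫ t in Ioi (0:ℝ), g (a + t) = ∫ s : ℝ, g s := by
  have h1 : ∀ s, g s = (Ioi a).indicator g s := by
    intro s
    by_cases hs : s ∈ Ioi a
    · rw [indicator_of_mem hs]
    · rw [indicator_of_notMem hs]; exact h s (not_lt.1 hs)
  have h2 : ∀ t, (Ioi (0:ℝ)).indicator (fun t => g (a + t)) t
      = (Ioi a).indicator g (a + t) := by
    intro t
    by_cases ht : t ∈ Ioi (0:ℝ)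
    · rw [indicator_of_mem ht, indicator_of_mem (by simp at ht ⊢; linarith)]
    · rw [indicator_of_notMem ht, indicator_of_notMem]
      simp at ht ⊢; linarith
  calc ∫ t in Ioi (0:ℝ), g (a + t)
      = ∫ t : ℝ, (Ioi (0:ℝ)).indicator (fun t => g (a + t)) t := by
        rw [integral_indicator measurableSet_Ioi]
    _ = ∫ t : ℝ, (Ioi a).indicator g (a + t) := by simp_rw [h2]
    _ = ∫ s : ℝ, (Ioi a).indicator g s := integral_add_left_eq_self _ a
    _ = ∫ s : ℝ, g s := by simp_rw [← h1]

/-- The cone beam transform agrees with the Radon transform on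
`V⁻_θ ∪ C⁻_θ ∪ V⁺_θ`: `(Bμ)(x,θ) = (Rμ)(x·θ^⊥,θ)` there. -/
theorem cbt_eq_radon_on_union
    (C : Set (ℝ × ℝ)) (hCcl : IsClosed C) (hCb : Bornology.IsBounded C)
    (hCconv : Convex ℝ C) (hCne : C.Nonempty)
    (μ : ℝ × ℝ → ℝ) (hμ : Integrable μ) (hsupp : ∀ x ∉ C, μ x = 0)
    (θ : ℝ × ℝ) (hθ : θ.1 ^ 2 + θ.2 ^ 2 = 1)
    (vminus vplus : ℝ)
    (hvminus : IsLeast ((fun x => dot x (perp θ)) '' C) vminus)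
    (hvplus : IsGreatest ((fun x => dot x (perp θ)) '' C) vplus)
    (uminus : ℝ → ℝ)
    (huminus : ∀ v ∈ Icc vminus vplus,
      IsLeast {t : ℝ | t • θ + v • perp θ ∈ C} (uminus v))
    (Cm Vm Vp : Set (ℝ × ℝ))
    (hCm : Cm = {x : ℝ × ℝ | dot x (perp θ) ∈ Icc vminus vplus ∧
      dot x θ < uminus (dot x (perp θ))})
    (hVm : Vm = {x : ℝ × ℝ | dot x (perp θ) < vminus})
    (hVp : Vp = {x : ℝ × ℝ | vplus < dot x (perp θ)}) :
    ∀ x ∈ Vm ∪ Cm ∪ Vp, cbt μ θ x = radon μ θ (dot x (perp θ)) := by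
  intro x hx
  set v := dot x (perp θ) with hv
  set a := dot x θ with ha
  set g : ℝ → ℝ := fun s => μ (v • perp θ + s • θ) with hg
  -- decomposition of x
  have hdec : ∀ t : ℝ, x + t • θ = v • perp θ + (a + t) • θ := by
    intro t
    have h1 : (x + t • θ).1 = (v • perp θ + (a + t) • θ).1 := by
      simp [hv, ha, dot, perp]; linear_combination (-x.1) * hθ
    have h2 : (x + t • θ).2 = (v • perp θ + (a + t) • θ).2 := by
      simp [hv, ha, dot, perp]; linear_combination (-x.2) * hθ
    exact Prod.ext h1 h2
  -- dot of line points with perp θ is v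
  have hdotline : ∀ s : ℝ, dot (v • perp θ + s • θ) (perp θ) = v := by
    intro s; simp [dot, perp]; linear_combination v * hθ
  have hcbt : cbt μ θ x = ∫ t in Ioi (0:ℝ), g (a + t) := by
    unfold cbt; simp_rw [hdec]; rfl
  have hradon : radon μ θ v = ∫ s : ℝ, g s := rfl
  rw [hcbt, hradon]
  apply key_shift
  intro s hs
  rcases hx with (hx | hx) | hx
  · -- Vm : v < vminus
    rw [hVm] at hx
    apply hsupp
    intro hmem
    have := hvminus.2 ⟨_, hmem, hdotline s⟩
    exact absurd hx (not_lt.2 this)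
  · -- Cm
    rw [hCm] at hx
    obtain ⟨hvIcc, hlt⟩ := hx
    apply hsupp
    intro hmem
    have hC : s • θ + v • perp θ ∈ C := by rwa [add_comm]
    have := (huminus v hvIcc).2 hC
    linarith
  · -- Vp : vplus < v
    rw [hVp] at hx
    apply hsupp
    intro hmem
    have := hvplus.2 ⟨_, hmem, hdotline s⟩
    exact absurd hx (not_lt.2 this)
end
end

section
/- The one-dimensional sinc function convolution along transversal directions: for linearly independent unit vectors θ_i, θ_j in ℝ² and b_i, b_j > 0, the convolution over ℝ² of the measures b_i sinc(b_i w·θ_i^⊥)δ(w·θ_i) and b_j sinc(b_j w·θ_j^⊥)δ(w·θ_j) equals (b_i b_j/|det(θ_i,θ_j)|) sinc(b_i (w·θ_j)/(θ_i^⊥·θ_j)) sinc(b_j (w·θ_i)/(θ_i·θ_j^⊥)) as a function of w. -/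
open MeasureTheory Set Real

noncomputable section

/-- Determinant of the 2×2 matrix with columns `θi`, `θj`. -/
def det2 (θi θj : ℝ × ℝ) : ℝ := θi.1 * θj.2 - θi.2 * θj.1

/-- Normalized sinc: `sinc t = sin (π t) / (π t)`, `sinc 0 = 1`. -/
def nsinc (t : ℝ) : ℝ := if t = 0 then 1 else Real.sin (π * t) / (π * t)

lemma nsinc_meas : Measurable nsinc := by
  unfold nsinc
  apply Measurable.ite (measurableSet_singleton 0) measurable_const
  fun_prop

lemma abs_nsinc_le_one (t : ℝ) : ‖nsinc t‖ ≤ 1 := by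
  unfold nsinc
  split_ifs with h
  · simp
  · rw [Real.norm_eq_abs, abs_div]
    exact div_le_one_of_le₀ (Real.abs_sin_le_abs) (abs_nonneg _)

/-- Convolution of the transversal line measures `bᵢ sinc(bᵢ w·θᵢ^⊥)δ(w·θᵢ)` and
`bⱼ sinc(bⱼ w·θⱼ^⊥)δ(w·θⱼ)` (each parametrized by arc length along its line) is the
absolutely continuous measure with density
`(bᵢbⱼ/|det(θᵢ,θⱼ)|) sinc(bᵢ (w·θⱼ)/(θᵢ^⊥·θⱼ)) sinc(bⱼ (w·θᵢ)/(θᵢ·θⱼ^⊥))`,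
tested against any Schwartz function. -/
theorem line_measures_convolution
    (θi θj : ℝ × ℝ)
    (hθi : θi.1 ^ 2 + θi.2 ^ 2 = 1) (hθj : θj.1 ^ 2 + θj.2 ^ 2 = 1)
    (hdet : det2 θi θj ≠ 0)
    (bi bj : ℝ) (hbi : 0 < bi) (hbj : 0 < bj) :
    ∀ φ : SchwartzMap (ℝ × ℝ) ℝ,
      (∫ s : ℝ, ∫ t : ℝ,
          (bi * nsinc (bi * s)) * (bj * nsinc (bj * t)) *
            φ (s • perp θi + t • perp θj)) =
        ∫ w : ℝ × ℝ,
          (bi * bj / |det2 θi θj|) *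
            nsinc (bi * dot w θj / dot (perp θi) θj) *
            nsinc (bj * dot w θi / dot θi (perp θj)) * φ w := by
  intro φ
  set d : ℝ := det2 θi θj with hd
  have habsd : |d| ≠ 0 := abs_ne_zero.mpr hdet
  -- the linear map (s,t) ↦ s • perp θi + t • perp θj
  set L0 : (ℝ × ℝ) →ₗ[ℝ] (ℝ × ℝ) :=
    (LinearMap.fst ℝ ℝ ℝ).smulRight (perp θi) + (LinearMap.snd ℝ ℝ ℝ).smulRight (perp θj) with hL0
  have hL0apply : ∀ p : ℝ × ℝ, L0 p = p.1 • perp θi + p.2 • perp θj := fun p => rfl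
  have hdetL : LinearMap.det L0 = d := by
    rw [← LinearMap.det_toMatrix (Module.Basis.finTwoProd ℝ), Matrix.det_fin_two]
    simp [LinearMap.toMatrix_apply, Module.Basis.finTwoProd_zero, Module.Basis.finTwoProd_one,
      Module.Basis.coe_finTwoProd_repr, hL0apply, perp, hd, det2]
    ring
  have hdetL0 : LinearMap.det L0 ≠ 0 := hdetL ▸ hdet
  set L : (ℝ × ℝ) ≃L[ℝ] (ℝ × ℝ) :=
    (L0.equivOfDetNeZero hdetL0).toContinuousLinearEquiv with hL
  have hLapply : ∀ p : ℝ × ℝ, L p = p.1 • perp θi + p.2 • perp θj := fun p => rfl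
  have hemb : MeasurableEmbedding (L : (ℝ × ℝ) → (ℝ × ℝ)) :=
    L.toHomeomorph.measurableEmbedding
  have hmap : Measure.map (L : (ℝ × ℝ) → (ℝ × ℝ)) volume
      = ENNReal.ofReal |d|⁻¹ • volume := by
    have h := Measure.map_linearMap_addHaar_eq_smul_addHaar (volume : Measure (ℝ × ℝ)) hdetL0
    rw [hdetL, abs_inv] at h
    have hco : (L : (ℝ × ℝ) → (ℝ × ℝ)) = ⇑L0 := rfl
    rw [hco, h]
  -- the density functions
  set G : (ℝ × ℝ) → ℝ := fun w =>
    (bi * bj / |d|) * nsinc (bi * dot w θj / dot (perp θi) θj) *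
      nsinc (bj * dot w θi / dot θi (perp θj)) * φ w with hG
  -- change of variables
  have key : ∫ p : ℝ × ℝ, G (L p) = |d|⁻¹ * ∫ w : ℝ × ℝ, G w := by
    rw [← hemb.integral_map, hmap, integral_smul_measure,
      ENNReal.toReal_ofReal (by positivity), smul_eq_mul]
  -- pointwise identity
  have hpt : ∀ p : ℝ × ℝ,
      (bi * nsinc (bi * p.1)) * (bj * nsinc (bj * p.2)) * φ (L p) = |d| * G (L p) := by
    intro p
    have h1 : dot (perp θi) θj = d := by simp [dot, perp, hd, det2]; ring
    have h2 : dot θi (perp θj) = -d := by simp [dot, perp, hd, det2]; ring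
    have h3 : dot (L p) θj = p.1 * d := by
      rw [hLapply]; simp [dot, perp, hd, det2]; ring
    have h4 : dot (L p) θi = p.2 * (-d) := by
      rw [hLapply]; simp [dot, perp, hd, det2]; ring
    rw [hG]
    simp only [h1, h2, h3, h4]
    have e1 : bi * (p.1 * d) / d = bi * p.1 := by
      rw [mul_div_assoc, mul_div_assoc, div_self hdet, mul_one]
    have e2 : bj * (p.2 * -d) / -d = bj * p.2 := by
      rw [mul_div_assoc, mul_div_assoc, neg_div_neg_eq, div_self hdet, mul_one]
    rw [e1, e2]
    have e3 : |d| * (bi * bj / |d|) = bi * bj := by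
      field_simp
    have e4 : |d| * (bi * bj / |d| * nsinc (bi * p.1) * nsinc (bj * p.2) * φ (L p))
        = (|d| * (bi * bj / |d|)) * (nsinc (bi * p.1) * nsinc (bj * p.2) * φ (L p)) := by
      ring
    rw [e4, e3]
    ring
  -- integrability for Fubini
  have hint : Integrable
      (Function.uncurry (fun s t : ℝ => (bi * nsinc (bi * s)) * (bj * nsinc (bj * t)) * φ (L (s, t))))
      ((volume : Measure ℝ).prod volume) := by
    rw [show (volume : Measure ℝ).prod volume = (volume : Measure (ℝ × ℝ)) from
      (Measure.volume_eq_prod ℝ ℝ).symm]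
    have hφL : Integrable (fun p : ℝ × ℝ => φ (L p)) volume := by
      have h5 : Integrable (⇑φ) (Measure.map (L : (ℝ × ℝ) → (ℝ × ℝ)) volume) := by
        rw [hmap]
        exact (φ.integrable).smul_measure ENNReal.ofReal_ne_top
      exact hemb.integrable_map_iff.mp h5
    apply Integrable.bdd_mul (c := bi * bj) hφL
    · apply AEStronglyMeasurable.mul <;> apply Measurable.aestronglyMeasurable
      · exact (nsinc_meas.comp (measurable_fst.const_mul bi)).const_mul bi
      · exact (nsinc_meas.comp (measurable_snd.const_mul bj)).const_mul bj
    · refine Filter.Eventually.of_forall (fun p => ?_)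
      rw [norm_mul, norm_mul, norm_mul]
      have nbi : ‖bi‖ = bi := by rw [Real.norm_eq_abs, abs_of_pos hbi]
      have nbj : ‖bj‖ = bj := by rw [Real.norm_eq_abs, abs_of_pos hbj]
      calc ‖bi‖ * ‖nsinc (bi * p.1)‖ * (‖bj‖ * ‖nsinc (bj * p.2)‖)
          ≤ ‖bi‖ * 1 * (‖bj‖ * 1) := by
            gcongr <;> exact abs_nsinc_le_one _
        _ = bi * bj := by rw [nbi, nbj]; ring
  -- conclude
  have hLst : ∀ s t : ℝ, s • perp θi + t • perp θj = L (s, t) := fun s t => rfl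
  show _ = ∫ w : ℝ × ℝ, G w
  calc (∫ s : ℝ, ∫ t : ℝ,
          (bi * nsinc (bi * s)) * (bj * nsinc (bj * t)) * φ (s • perp θi + t • perp θj))
      = ∫ p : ℝ × ℝ, (bi * nsinc (bi * p.1)) * (bj * nsinc (bj * p.2)) * φ (L (p.1, p.2))
          ∂((volume : Measure ℝ).prod volume) := by
        simp only [hLst]
        exact MeasureTheory.integral_integral hint
    _ = ∫ p : ℝ × ℝ, |d| * G (L p) := by
        rw [show (volume : Measure ℝ).prod volume = (volume : Measure (ℝ × ℝ)) from
          (Measure.volume_eq_prod ℝ ℝ).symm]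
        congr 1
        ext p
        rw [← hpt p]
    _ = |d| * ∫ p : ℝ × ℝ, G (L p) := integral_const_mul _ _
    _ = |d| * (|d|⁻¹ * ∫ w : ℝ × ℝ, G w) := by rw [key]
    _ = ∫ w : ℝ × ℝ, G w := by rw [← mul_assoc, mul_inv_cancel₀ habsd, one_mul]
end
end

section
/- Recovery from shifted differences with sufficiently large shifts: let μ: ℝ² → ℝ be supported in the parallelogram P = {s_iθ_i + s_jθ_j : |s_i| ≤ α_i/2, |s_j| ≤ α_j/2} for linearly independent unit vectors θ_i, θ_j, and let a_i > α_i/2, a_j > α_j/2. Define μ^m(x) = μ(x + (a_i/2)θ_i + (a_j/2)θ_j) − μ(x − (a_i/2)θ_i + (a_j/2)θ_j) − μ(x + (a_i/2)θ_i − (a_j/2)θ_j) + μ(x − (a_i/2)θ_i − (a_j/2)θ_j). Then for s_i, s_j ≥ 0, μ(s_iθ_i + s_jθ_j) = μ^m((s_i + a_i/2)θ_i + (s_j + a_j/2)θ_j); in particular μ is completely determined by μ^m via the four sign cases on (s_i, s_j). -/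
open Set

noncomputable section

lemma unique_coords (θi θj : ℝ × ℝ) (hdet : det2 θi θj ≠ 0)
    (c d s t : ℝ) (h : s • θi + t • θj = c • θi + d • θj) : s = c ∧ t = d := by
  have h1 : s * θi.1 + t * θj.1 = c * θi.1 + d * θj.1 := congrArg Prod.fst h
  have h2 : s * θi.2 + t * θj.2 = c * θi.2 + d * θj.2 := congrArg Prod.snd h
  unfold det2 at hdet
  constructor
  · have : (s - c) * (θi.1 * θj.2 - θi.2 * θj.1) = 0 := by linear_combination θj.2 * h1 - θj.1 * h2
    have := mul_eq_zero.mp this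
    rcases this with h | h
    · linarith [sub_eq_zero.mp h]
    · exact absurd h hdet
  · have : (t - d) * (θi.1 * θj.2 - θi.2 * θj.1) = 0 := by linear_combination θi.1 * h2 - θi.2 * h1
    rcases mul_eq_zero.mp this with h | h
    · linarith [sub_eq_zero.mp h]
    · exact absurd h hdet

/-- If `μ` is supported in the parallelogram `P` with half edge lengths `αᵢ/2, αⱼ/2`
along linearly independent unit directions `θᵢ, θⱼ`, and the shifts satisfy
`aᵢ > αᵢ/2`, `aⱼ > αⱼ/2`, then the image is recovered from the four-point
difference `μᵐ`: for `sᵢ, sⱼ ≥ 0`,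
`μ(sᵢθᵢ + sⱼθⱼ) = μᵐ((sᵢ + aᵢ/2)θᵢ + (sⱼ + aⱼ/2)θⱼ)`. -/
theorem recovery_from_shifted_differences
    (θi θj : ℝ × ℝ)
    (hθi : θi.1 ^ 2 + θi.2 ^ 2 = 1) (hθj : θj.1 ^ 2 + θj.2 ^ 2 = 1)
    (hdet : det2 θi θj ≠ 0)
    (αi αj : ℝ) (hαi : 0 < αi) (hαj : 0 < αj)
    (μ : ℝ × ℝ → ℝ)
    (P : Set (ℝ × ℝ))
    (hP : P = {x : ℝ × ℝ | ∃ si sj : ℝ,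
      |si| ≤ αi / 2 ∧ |sj| ≤ αj / 2 ∧ x = si • θi + sj • θj})
    (hsupp : ∀ x ∉ P, μ x = 0)
    (ai aj : ℝ) (hai : αi / 2 < ai) (haj : αj / 2 < aj)
    (μm : ℝ × ℝ → ℝ)
    (hμm : μm = fun x =>
      μ (x + (ai / 2) • θi + (aj / 2) • θj) - μ (x - (ai / 2) • θi + (aj / 2) • θj) -
        μ (x + (ai / 2) • θi - (aj / 2) • θj) + μ (x - (ai / 2) • θi - (aj / 2) • θj)) :
    ∀ si sj : ℝ, 0 ≤ si → 0 ≤ sj →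
      μ (si • θi + sj • θj) =
        μm ((si + ai / 2) • θi + (sj + aj / 2) • θj) := by
  intro si sj hsi hsj
  -- vanishing lemma
  have hzero : ∀ c d : ℝ, (αi / 2 < |c| ∨ αj / 2 < |d|) → μ (c • θi + d • θj) = 0 := by
    intro c d hcd
    apply hsupp
    rw [hP]
    rintro ⟨s, t, hs, ht, heq⟩
    obtain ⟨hc, hd⟩ := unique_coords θi θj hdet c d s t heq.symm
    rcases hcd with h | h
    · rw [hc] at hs; linarith
    · rw [hd] at ht; linarith
  rw [hμm]
  simp only
  have e1 : (si + ai / 2) • θi + (sj + aj / 2) • θj + (ai / 2) • θi + (aj / 2) • θj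
      = (si + ai) • θi + (sj + aj) • θj := by module
  have e2 : (si + ai / 2) • θi + (sj + aj / 2) • θj - (ai / 2) • θi + (aj / 2) • θj
      = si • θi + (sj + aj) • θj := by module
  have e3 : (si + ai / 2) • θi + (sj + aj / 2) • θj + (ai / 2) • θi - (aj / 2) • θj
      = (si + ai) • θi + sj • θj := by module
  have e4 : (si + ai / 2) • θi + (sj + aj / 2) • θj - (ai / 2) • θi - (aj / 2) • θj
      = si • θi + sj • θj := by module
  rw [e1, e2, e3, e4]
  have z1 : μ ((si + ai) • θi + (sj + aj) • θj) = 0 := by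
    apply hzero; left; rw [abs_of_nonneg (by linarith)]; linarith
  have z2 : μ (si • θi + (sj + aj) • θj) = 0 := by
    apply hzero; right; rw [abs_of_nonneg (by linarith)]; linarith
  have z3 : μ ((si + ai) • θi + sj • θj) = 0 := by
    apply hzero; left; rw [abs_of_nonneg (by linarith)]; linarith
  rw [z1, z2, z3]
  ring
end
end

section
/- The filtered forward identity: for a compactly supported integrable μ on ℝ² and linearly independent unit vectors θ_i, θ_j, if g^m denotes the broken ray data filtered with the four-point difference PSF with shifts a_i, a_j > 0 (as in g^m(x) = g(x+(a_i/2)θ_i+(a_j/2)θ_j) − g(x−(a_i/2)θ_i+(a_j/2)θ_j) − g(x+(a_i/2)θ_i−(a_j/2)θ_j) + g(x−(a_i/2)θ_i−(a_j/2)θ_j) with g = Gμ), then g^m(x) = −(d/d(θ_i+θ_j))[(μ * p)(x)]/|det(θ_i,θ_j)|, where p is the indicator of the parallelogram with edge lengths a_i, a_j in directions θ_i, θ_j centered at the origin, * is convolution on ℝ², and d/d(θ_i+θ_j) is the (unnormalized) directional derivative along θ_i+θ_j. -/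
open MeasureTheory Set

noncomputable section

/-- Indicator of `[-T/2, T/2]`. -/
def rect (T t : ℝ) : ℝ := if |t| ≤ T / 2 then 1 else 0

/-- Broken ray transform. -/
def brt (μ : ℝ × ℝ → ℝ) (θi θj x : ℝ × ℝ) : ℝ := cbt μ θi x + cbt μ θj x

/-! ### Auxiliary lemmas -/

theorem my_swap {F : ℝ → ℝ → ℝ} (hF : Continuous (Function.uncurry F)) (a₁ a₂ b₁ b₂ : ℝ) :
    ∫ s in a₁..a₂, ∫ t in b₁..b₂, F s t = ∫ t in b₁..b₂, ∫ s in a₁..a₂, F s t := by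
  have core : ∀ (c₁ c₂ d₁ d₂ : ℝ), c₁ ≤ c₂ → d₁ ≤ d₂ →
      ∫ s in c₁..c₂, ∫ t in d₁..d₂, F s t = ∫ t in d₁..d₂, ∫ s in c₁..c₂, F s t := by
    intro c₁ c₂ d₁ d₂ h1 h2
    rw [intervalIntegral.integral_of_le h1, intervalIntegral.integral_of_le h2]
    simp_rw [intervalIntegral.integral_of_le h1, intervalIntegral.integral_of_le h2]
    have hint : Integrable (Function.uncurry F)
        ((volume.restrict (Ioc c₁ c₂)).prod (volume.restrict (Ioc d₁ d₂))) := by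
      rw [Measure.prod_restrict]
      exact (hF.continuousOn.integrableOn_compact (isCompact_Icc.prod isCompact_Icc)).mono_set
        (prod_mono Ioc_subset_Icc_self Ioc_subset_Icc_self)
    exact MeasureTheory.integral_integral_swap hint
  rcases le_total a₁ a₂ with h1 | h1 <;> rcases le_total b₁ b₂ with h2 | h2
  · exact core _ _ _ _ h1 h2
  · rw [intervalIntegral.integral_symm b₂ b₁]
    simp_rw [intervalIntegral.integral_symm b₂ b₁]
    rw [intervalIntegral.integral_neg, core _ _ _ _ h1 h2]
  · rw [intervalIntegral.integral_symm a₂ a₁]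
    simp_rw [intervalIntegral.integral_symm a₂ a₁]
    rw [core _ _ _ _ h1 h2, intervalIntegral.integral_neg]
  · rw [intervalIntegral.integral_symm a₂ a₁, intervalIntegral.integral_symm b₂ b₁]
    simp_rw [intervalIntegral.integral_symm b₂ b₁, intervalIntegral.integral_symm a₂ a₁]
    rw [intervalIntegral.integral_neg, core _ _ _ _ h1 h2]
    simp [intervalIntegral.integral_neg]

theorem supp1d {μ : ℝ × ℝ → ℝ} (hμsupp : HasCompactSupport μ) (y θ : ℝ × ℝ) (hθ : θ ≠ 0) :
    HasCompactSupport fun u : ℝ => μ (y + u • θ) := by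
  obtain ⟨R, hR⟩ := hμsupp.isCompact.isBounded.subset_closedBall 0
  have hθn : 0 < ‖θ‖ := norm_pos_iff.mpr hθ
  apply HasCompactSupport.intro (isCompact_Icc (a := -((R + ‖y‖) / ‖θ‖)) (b := (R + ‖y‖) / ‖θ‖))
  intro u hu
  by_contra h
  have hmem : y + u • θ ∈ tsupport μ := subset_tsupport μ h
  have h1 : ‖y + u • θ‖ ≤ R := by simpa using hR hmem
  have h2 : |u| * ‖θ‖ ≤ R + ‖y‖ := by
    have : ‖u • θ‖ ≤ ‖y + u • θ‖ + ‖y‖ := by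
      have := norm_sub_le (y + u • θ) y
      simpa using this
    rw [norm_smul, Real.norm_eq_abs] at this
    linarith
  have : |u| ≤ (R + ‖y‖) / ‖θ‖ := (le_div_iff₀ hθn).mpr h2
  exact hu (abs_le.mp this |> fun ⟨h3, h4⟩ => ⟨h3, h4⟩)

theorem cbt_shift {μ : ℝ × ℝ → ℝ} (y θ : ℝ × ℝ) (ε : ℝ) :
    cbt μ θ (y + ε • θ) = ∫ u in Ioi ε, μ (y + u • θ) := by
  have h1 : ∀ t : ℝ, y + ε • θ + t • θ = y + (t + ε) • θ := by
    intro t; rw [add_smul]; abel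
  unfold cbt
  simp_rw [h1]
  rw [← integral_indicator measurableSet_Ioi, ← integral_indicator measurableSet_Ioi]
  rw [show ((Ioi (0:ℝ)).indicator fun t => μ (y + (t + ε) • θ)) =
      fun t => (Ioi ε).indicator (fun u => μ (y + u • θ)) (t + ε) by
    funext t
    by_cases ht : t ∈ Ioi (0:ℝ)
    · rw [indicator_of_mem ht, indicator_of_mem (by simpa using ht)]
    · rw [indicator_of_notMem ht, indicator_of_notMem (by simpa using ht)]]
  exact integral_add_right_eq_self _ ε

theorem cbt_diff {μ : ℝ × ℝ → ℝ} (hμc : Continuous μ) (hμsupp : HasCompactSupport μ)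
    (y θ : ℝ × ℝ) (hθ : θ ≠ 0) (ε ε' : ℝ) :
    cbt μ θ (y + ε • θ) - cbt μ θ (y + ε' • θ) = -∫ u in ε'..ε, μ (y + u • θ) := by
  have hc : Continuous fun u : ℝ => μ (y + u • θ) := by fun_prop
  have hint : Integrable fun u : ℝ => μ (y + u • θ) :=
    hc.integrable_of_hasCompactSupport (supp1d hμsupp y θ hθ)
  rw [cbt_shift, cbt_shift]
  have key : ∀ δ : ℝ, (∫ u in Ioi δ, μ (y + u • θ)) =
      (∫ u : ℝ, μ (y + u • θ)) - ∫ u in Iic δ, μ (y + u • θ) := by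
    intro δ
    have := integral_add_compl (measurableSet_Iic (a := δ)) hint
    rw [compl_Iic] at this
    linarith
  rw [key, key, ← intervalIntegral.integral_Iic_sub_Iic hint.integrableOn hint.integrableOn]
  ring

theorem deriv_moving {Φ : ℝ → ℝ → ℝ} (hΦ : Continuous fun p : ℝ × ℝ => Φ p.1 p.2) (c : ℝ) :
    HasDerivAt (fun h : ℝ => ∫ s in c..(h + c), Φ s h) (Φ c 0) 0 := by
  rw [hasDerivAt_iff_isLittleO]
  rw [Asymptotics.isLittleO_iff]
  intro ε εpos
  obtain ⟨δ, δpos, hδ⟩ := Metric.continuousAt_iff.mp hΦ.continuousAt (ε := ε) εpos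
  have hball : Metric.ball (0 : ℝ) δ ∈ nhds (0 : ℝ) := Metric.ball_mem_nhds 0 δpos
  filter_upwards [hball] with h hh
  have hhδ : |h| < δ := by simpa [Real.dist_eq] using hh
  have hInt : ∀ h' : ℝ, IntervalIntegrable (fun s => Φ s h') volume c (h' + c) :=
    fun h' => (hΦ.comp (continuous_id.prodMk continuous_const)).intervalIntegrable _ _
  have hconst : (h : ℝ) * Φ c 0 = ∫ s in c..(h + c), Φ c 0 := by
    rw [intervalIntegral.integral_const]
    simp [smul_eq_mul]
  simp only [zero_add, intervalIntegral.integral_same, sub_zero, smul_eq_mul]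
  rw [hconst, ← intervalIntegral.integral_sub (hInt h) intervalIntegrable_const]
  have bound : ∀ s ∈ Set.uIoc c (h + c), ‖Φ s h - Φ c 0‖ ≤ ε := by
    intro s hs
    have hsc : |s - c| ≤ |h| := by
      rcases Set.mem_uIoc.mp hs with ⟨h1, h2⟩ | ⟨h1, h2⟩
      · have := le_abs_self h
        rw [abs_of_pos (by linarith)]; linarith
      · have := neg_abs_le h
        rw [abs_of_nonpos (by linarith)]; linarith
    have hdist : dist (s, h) (c, (0 : ℝ)) < δ := by
      rw [Prod.dist_eq]
      simp only [Real.dist_eq, sub_zero]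
      exact max_lt (lt_of_le_of_lt hsc hhδ) hhδ
    have := hδ hdist
    rw [Real.dist_eq] at this
    exact le_of_lt (by simpa using this)
  calc ‖∫ s in c..(h + c), (Φ s h - Φ c 0)‖ ≤ ε * |h + c - c| :=
        intervalIntegral.norm_integral_le_of_norm_le_const bound
    _ = ε * ‖h‖ := by simp [Real.norm_eq_abs]

variable (θi θj : ℝ × ℝ)

/-- The linear map `(s,t) ↦ s•θi + t•θj`. -/
def Lmap : (ℝ × ℝ) →ₗ[ℝ] (ℝ × ℝ) where
  toFun w := w.1 • θi + w.2 • θj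
  map_add' w v := by
    simp only [Prod.fst_add, Prod.snd_add, add_smul]; abel
  map_smul' c w := by
    simp only [Prod.smul_fst, Prod.smul_snd, smul_eq_mul, mul_smul, RingHom.id_apply, smul_add]

theorem Lmap_det : LinearMap.det (Lmap θi θj) = det2 θi θj := by
  rw [← LinearMap.det_toMatrix (Module.Basis.finTwoProd ℝ), Matrix.det_fin_two]
  simp [LinearMap.toMatrix_apply, Lmap, Module.Basis.finTwoProd_zero, Module.Basis.finTwoProd_one,
    Module.Basis.coe_finTwoProd_repr, det2]
  ring

/-- The homeomorphism version of `Lmap`. -/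
def Lhomeo (hdet : det2 θi θj ≠ 0) : (ℝ × ℝ) ≃ₜ (ℝ × ℝ) where
  toFun w := w.1 • θi + w.2 • θj
  invFun w := (-(dot w (perp θj)) / det2 θi θj, dot w (perp θi) / det2 θi θj)
  left_inv w := by
    ext
    · show -(dot (w.1 • θi + w.2 • θj) (perp θj)) / det2 θi θj = w.1
      rw [div_eq_iff hdet]
      simp only [dot, perp, det2, Prod.fst_add, Prod.snd_add, Prod.smul_fst, Prod.smul_snd,
        smul_eq_mul]
      ring
    · show dot (w.1 • θi + w.2 • θj) (perp θi) / det2 θi θj = w.2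
      rw [div_eq_iff hdet]
      simp only [dot, perp, det2, Prod.fst_add, Prod.snd_add, Prod.smul_fst, Prod.smul_snd,
        smul_eq_mul]
      ring
  right_inv w := by
    ext
    · show (-(dot w (perp θj)) / det2 θi θj) * θi.1 + (dot w (perp θi) / det2 θi θj) * θj.1 = w.1
      rw [div_mul_eq_mul_div, div_mul_eq_mul_div, ← add_div, div_eq_iff hdet]
      simp only [dot, perp, det2]
      ring
    · show (-(dot w (perp θj)) / det2 θi θj) * θi.2 + (dot w (perp θi) / det2 θi θj) * θj.2 = w.2
      rw [div_mul_eq_mul_div, div_mul_eq_mul_div, ← add_div, div_eq_iff hdet]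
      simp only [dot, perp, det2]
      ring
  continuous_toFun := by fun_prop
  continuous_invFun := by
    show Continuous fun w : ℝ × ℝ => (-(dot w (perp θj)) / det2 θi θj, dot w (perp θi) / det2 θi θj)
    simp only [dot, perp]
    fun_prop

theorem change_var (hdet : det2 θi θj ≠ 0) (G : ℝ × ℝ → ℝ) :
    ∫ w, G w = |det2 θi θj| * ∫ w : ℝ × ℝ, G (w.1 • θi + w.2 • θj) := by
  have hD : LinearMap.det (Lmap θi θj) ≠ 0 := by rw [Lmap_det]; exact hdet
  have hmap : Measure.map (Lmap θi θj) volume =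
      ENNReal.ofReal |(LinearMap.det (Lmap θi θj))⁻¹| • volume :=
    Measure.map_linearMap_addHaar_eq_smul_addHaar volume hD
  have hemb : MeasurableEmbedding (Lhomeo θi θj hdet) :=
    (Lhomeo θi θj hdet).measurableEmbedding
  have hcoe : ⇑(Lhomeo θi θj hdet) = ⇑(Lmap θi θj) := rfl
  have h1 : ∫ w, G ((Lhomeo θi θj hdet) w) = ∫ w, G w ∂(Measure.map (Lhomeo θi θj hdet) volume) :=
    (hemb.integral_map G).symm
  rw [hcoe, hmap, integral_smul_measure, Lmap_det] at h1
  have : (ENNReal.ofReal |(det2 θi θj)⁻¹|).toReal = |det2 θi θj|⁻¹ := by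
    rw [ENNReal.toReal_ofReal (abs_nonneg _), abs_inv]
  rw [this] at h1
  have h2 : ∫ w : ℝ × ℝ, G (w.1 • θi + w.2 • θj) = |det2 θi θj|⁻¹ • ∫ w, G w := h1
  rw [h2, smul_eq_mul, ← mul_assoc, mul_inv_cancel₀ (by positivity), one_mul]

theorem conv_formula {μ : ℝ × ℝ → ℝ} (hμc : Continuous μ) (hμsupp : HasCompactSupport μ)
    {θi θj : ℝ × ℝ} (hdet : det2 θi θj ≠ 0)
    {ai aj : ℝ} (hai : 0 < ai) (haj : 0 < aj)
    {bi bj : ℝ} (hbi : bi = aj * |det2 θi θj|) (hbj : bj = ai * |det2 θi θj|)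
    {p : ℝ × ℝ → ℝ}
    (hp : p = fun x => rect bi (dot x (perp θi)) * rect bj (dot x (perp θj)))
    (z : ℝ × ℝ) :
    ∫ y : ℝ × ℝ, μ y * p (z - y) =
      |det2 θi θj| * ∫ s in (-(ai/2))..(ai/2), ∫ t in (-(aj/2))..(aj/2),
        μ (z - s • θi - t • θj) := by
  have hDpos : 0 < |det2 θi θj| := abs_pos.mpr hdet
  have step1 : ∫ y : ℝ × ℝ, μ y * p (z - y) = ∫ y : ℝ × ℝ, μ (z - y) * p y := by
    have h := MeasureTheory.integral_sub_left_eq_self (fun y => μ y * p (z - y))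
      (volume : Measure (ℝ × ℝ)) z
    simp only [sub_sub_cancel] at h
    exact h.symm
  have step2 : ∫ y : ℝ × ℝ, μ (z - y) * p y =
      |det2 θi θj| * ∫ w : ℝ × ℝ, μ (z - (w.1 • θi + w.2 • θj)) * p (w.1 • θi + w.2 • θj) :=
    change_var θi θj hdet (fun w => μ (z - w) * p w)
  have hpL : ∀ w : ℝ × ℝ, p (w.1 • θi + w.2 • θj) =
      (if |w.2| ≤ aj/2 then (1:ℝ) else 0) * (if |w.1| ≤ ai/2 then (1:ℝ) else 0) := by
    intro w
    rw [hp]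
    dsimp only
    have e1 : dot (w.1 • θi + w.2 • θj) (perp θi) = w.2 * det2 θi θj := by
      simp only [dot, perp, det2, Prod.fst_add, Prod.snd_add, Prod.smul_fst, Prod.smul_snd,
        smul_eq_mul]
      ring
    have e2 : dot (w.1 • θi + w.2 • θj) (perp θj) = -(w.1 * det2 θi θj) := by
      simp only [dot, perp, det2, Prod.fst_add, Prod.snd_add, Prod.smul_fst, Prod.smul_snd,
        smul_eq_mul]
      ring
    rw [e1, e2]
    unfold rect
    rw [abs_neg]
    have c1 : (|w.2 * det2 θi θj| ≤ bi / 2) = (|w.2| ≤ aj / 2) := by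
      rw [abs_mul, show bi / 2 = (aj/2) * |det2 θi θj| by rw [hbi]; ring]
      exact propext (mul_le_mul_iff_of_pos_right hDpos)
    have c2 : (|w.1 * det2 θi θj| ≤ bj / 2) = (|w.1| ≤ ai / 2) := by
      rw [abs_mul, show bj / 2 = (ai/2) * |det2 θi θj| by rw [hbj]; ring]
      exact propext (mul_le_mul_iff_of_pos_right hDpos)
    simp only [c1, c2]
  have step3 : (fun w : ℝ × ℝ => μ (z - (w.1 • θi + w.2 • θj)) * p (w.1 • θi + w.2 • θj)) =
      fun w : ℝ × ℝ => ((if |w.1| ≤ ai/2 then (1:ℝ) else 0) * (if |w.2| ≤ aj/2 then (1:ℝ) else 0))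
        * μ (z - w.1 • θi - w.2 • θj) := by
    funext w
    rw [hpL w, ← sub_sub]
    ring
  have hkc : Continuous fun w : ℝ × ℝ => μ (z - w.1 • θi - w.2 • θj) :=
    hμc.comp (by fun_prop)
  have hksupp : HasCompactSupport fun w : ℝ × ℝ => μ (z - w.1 • θi - w.2 • θj) := by
    have h1 : HasCompactSupport (μ ∘ fun v : ℝ × ℝ => z + -v) :=
      hμsupp.comp_homeomorph ((Homeomorph.neg (ℝ × ℝ)).trans (Homeomorph.addLeft z))
    have h2 : HasCompactSupport ((μ ∘ fun v : ℝ × ℝ => z + -v) ∘ (Lhomeo θi θj hdet)) :=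
      h1.comp_homeomorph _
    have : (fun w : ℝ × ℝ => μ (z - w.1 • θi - w.2 • θj)) =
        (μ ∘ fun v : ℝ × ℝ => z + -v) ∘ (Lhomeo θi θj hdet) := by
      funext w
      show μ (z - w.1 • θi - w.2 • θj) = μ (z + -(w.1 • θi + w.2 • θj))
      rw [← sub_eq_add_neg, sub_sub]
    rwa [this]
  have hkint : Integrable (fun w : ℝ × ℝ => μ (z - w.1 • θi - w.2 • θj)) :=
    hkc.integrable_of_hasCompactSupport hksupp
  have hindm : AEStronglyMeasurable
      (fun w : ℝ × ℝ => (if |w.1| ≤ ai/2 then (1:ℝ) else 0) * (if |w.2| ≤ aj/2 then (1:ℝ) else 0))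
      volume := by
    apply Measurable.aestronglyMeasurable
    exact (Measurable.ite (measurableSet_le measurable_fst.abs measurable_const)
        measurable_const measurable_const).mul
      (Measurable.ite (measurableSet_le measurable_snd.abs measurable_const)
        measurable_const measurable_const)
  have hIint : Integrable (fun w : ℝ × ℝ =>
      ((if |w.1| ≤ ai/2 then (1:ℝ) else 0) * (if |w.2| ≤ aj/2 then (1:ℝ) else 0))
        * μ (z - w.1 • θi - w.2 • θj)) :=
    hkint.bdd_mul hindm (c := 1) (Filter.Eventually.of_forall fun w => by
      rw [Real.norm_eq_abs]
      split_ifs <;> norm_num)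
  have step4 : ∫ w : ℝ × ℝ,
      ((if |w.1| ≤ ai/2 then (1:ℝ) else 0) * (if |w.2| ≤ aj/2 then (1:ℝ) else 0))
        * μ (z - w.1 • θi - w.2 • θj) =
      ∫ s : ℝ, ∫ t : ℝ, ((if |s| ≤ ai/2 then (1:ℝ) else 0) * (if |t| ≤ aj/2 then (1:ℝ) else 0))
        * μ (z - s • θi - t • θj) := by
    rw [MeasureTheory.Measure.volume_eq_prod] at hIint ⊢
    exact (MeasureTheory.integral_prod _ hIint).trans rfl
  have inner_eq : ∀ s : ℝ, (∫ t : ℝ,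
      ((if |s| ≤ ai/2 then (1:ℝ) else 0) * (if |t| ≤ aj/2 then (1:ℝ) else 0))
        * μ (z - s • θi - t • θj)) =
      (if |s| ≤ ai/2 then (1:ℝ) else 0) * ∫ t in (-(aj/2))..(aj/2), μ (z - s • θi - t • θj) := by
    intro s
    have : (fun t : ℝ => ((if |s| ≤ ai/2 then (1:ℝ) else 0) * (if |t| ≤ aj/2 then (1:ℝ) else 0))
        * μ (z - s • θi - t • θj)) =
        fun t : ℝ => (if |s| ≤ ai/2 then (1:ℝ) else 0) *
          ((Icc (-(aj/2)) (aj/2)).indicator (fun t => μ (z - s • θi - t • θj)) t) := by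
      funext t
      by_cases h : |t| ≤ aj/2
      · rw [if_pos h, Set.indicator_of_mem (by rw [mem_Icc]; exact abs_le.mp h)]
        ring
      · rw [if_neg h, Set.indicator_of_notMem
          (by simp only [mem_Icc]; exact fun hc => h (abs_le.mpr hc))]
        ring
    rw [this, MeasureTheory.integral_const_mul, integral_indicator measurableSet_Icc,
      MeasureTheory.integral_Icc_eq_integral_Ioc,
      ← intervalIntegral.integral_of_le (by linarith : -(aj/2) ≤ aj/2)]
  have outer_eq : (∫ s : ℝ, (if |s| ≤ ai/2 then (1:ℝ) else 0) *
      ∫ t in (-(aj/2))..(aj/2), μ (z - s • θi - t • θj)) =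
      ∫ s in (-(ai/2))..(ai/2), ∫ t in (-(aj/2))..(aj/2), μ (z - s • θi - t • θj) := by
    have : (fun s : ℝ => (if |s| ≤ ai/2 then (1:ℝ) else 0) *
        ∫ t in (-(aj/2))..(aj/2), μ (z - s • θi - t • θj)) =
        fun s : ℝ => (Icc (-(ai/2)) (ai/2)).indicator
          (fun s => ∫ t in (-(aj/2))..(aj/2), μ (z - s • θi - t • θj)) s := by
      funext s
      by_cases h : |s| ≤ ai/2
      · rw [if_pos h, Set.indicator_of_mem (by rw [mem_Icc]; exact abs_le.mp h)]
        ring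
      · rw [if_neg h, Set.indicator_of_notMem
          (by simp only [mem_Icc]; exact fun hc => h (abs_le.mpr hc))]
        ring
    rw [this, integral_indicator measurableSet_Icc,
      MeasureTheory.integral_Icc_eq_integral_Ioc,
      ← intervalIntegral.integral_of_le (by linarith : -(ai/2) ≤ ai/2)]
  rw [step1, step2, step3, step4]
  simp_rw [inner_eq]
  rw [outer_eq]

/-! ### Helper functions for the derivative computation -/

variable (μ : ℝ × ℝ → ℝ) (x : ℝ × ℝ)

def ffD (s t : ℝ) : ℝ := μ (x + s • θi + t • θj)

def PhiD (b s h : ℝ) : ℝ := ∫ t in (h - b)..(h + b), ffD θi θj μ x s t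

def qqD (a t : ℝ) : ℝ := ∫ s in (-a)..a, ffD θi θj μ x s t

def QQD (a u : ℝ) : ℝ := ∫ t in (0:ℝ)..u, qqD θi θj μ x a t

theorem ffD_cont {μ : ℝ × ℝ → ℝ} (hμc : Continuous μ) :
    Continuous fun q : ℝ × ℝ => ffD θi θj μ x q.1 q.2 := by
  unfold ffD
  exact hμc.comp (((continuous_const.add (continuous_fst.smul continuous_const)).add
    (continuous_snd.smul continuous_const)))

theorem qqD_cont {μ : ℝ × ℝ → ℝ} (hμc : Continuous μ) (a : ℝ) :
    Continuous (qqD θi θj μ x a) := by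
  unfold qqD
  exact intervalIntegral.continuous_parametric_intervalIntegral_of_continuous'
    (f := fun t s => ffD θi θj μ x s t)
    ((ffD_cont θi θj x hμc).comp (continuous_snd.prodMk continuous_fst)) (-a) a

theorem PhiD_cont {μ : ℝ × ℝ → ℝ} (hμc : Continuous μ) (b : ℝ) :
    Continuous fun q : ℝ × ℝ => PhiD θi θj μ x b q.1 q.2 := by
  have base : Continuous (Function.uncurry fun (q : ℝ × ℝ) t => ffD θi θj μ x q.1 t) :=
    (ffD_cont θi θj x hμc).comp
      ((continuous_fst.comp continuous_fst).prodMk continuous_snd)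
  have h1 : Continuous fun q : ℝ × ℝ => ∫ t in (0:ℝ)..(q.2 + b), ffD θi θj μ x q.1 t :=
    intervalIntegral.continuous_parametric_intervalIntegral_of_continuous base
      (continuous_snd.add continuous_const)
  have h2 : Continuous fun q : ℝ × ℝ => ∫ t in (0:ℝ)..(q.2 - b), ffD θi θj μ x q.1 t :=
    intervalIntegral.continuous_parametric_intervalIntegral_of_continuous base
      (continuous_snd.sub continuous_const)
  have heq : (fun q : ℝ × ℝ => PhiD θi θj μ x b q.1 q.2) =
      fun q : ℝ × ℝ => (∫ t in (0:ℝ)..(q.2 + b), ffD θi θj μ x q.1 t) -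
        ∫ t in (0:ℝ)..(q.2 - b), ffD θi θj μ x q.1 t := by
    funext q
    have hcf : Continuous fun t => ffD θi θj μ x q.1 t :=
      Continuous.comp (f := fun t : ℝ => (q.1, t)) (ffD_cont θi θj x hμc)
        (continuous_const.prodMk continuous_id)
    unfold PhiD
    rw [intervalIntegral.integral_interval_sub_left (hcf.intervalIntegrable _ _)
      (hcf.intervalIntegrable _ _)]
  rw [heq]
  exact h1.sub h2

theorem QQD_deriv {μ : ℝ × ℝ → ℝ} (hμc : Continuous μ) (a u : ℝ) :
    HasDerivAt (QQD θi θj μ x a) (qqD θi θj μ x a u) u := by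
  unfold QQD
  exact intervalIntegral.integral_hasDerivAt_right
    ((qqD_cont θi θj x hμc a).intervalIntegrable _ _)
    ((qqD_cont θi θj x hμc a).stronglyMeasurableAtFilter _ _)
    (qqD_cont θi θj x hμc a).continuousAt

set_option maxHeartbeats 2000000 in
/-- The filtered forward identity: the four-point filtered broken ray data equal
minus the directional derivative along `θᵢ + θⱼ` of `μ * p`, divided by
`|det(θᵢ,θⱼ)|`, where `p` is the origin-centered parallelogram indicator. -/
theorem filtered_forward_identity
    (μ : ℝ × ℝ → ℝ) (hμc : Continuous μ) (hμsupp : HasCompactSupport μ)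
    (θi θj : ℝ × ℝ)
    (hθi : θi.1 ^ 2 + θi.2 ^ 2 = 1) (hθj : θj.1 ^ 2 + θj.2 ^ 2 = 1)
    (hdet : det2 θi θj ≠ 0)
    (ai aj : ℝ) (hai : 0 < ai) (haj : 0 < aj)
    (bi bj : ℝ) (hbi : bi = aj * |det2 θi θj|) (hbj : bj = ai * |det2 θi θj|)
    (p : ℝ × ℝ → ℝ)
    (hp : p = fun x => rect bi (dot x (perp θi)) * rect bj (dot x (perp θj)))
    (conv : ℝ × ℝ → ℝ)
    (hconv : conv = fun x => ∫ y : ℝ × ℝ, μ y * p (x - y))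
    (g gm : ℝ × ℝ → ℝ)
    (hg : g = brt μ θi θj)
    (hgm : gm = fun x =>
      g (x + (ai / 2) • θi + (aj / 2) • θj) - g (x - (ai / 2) • θi + (aj / 2) • θj) -
        g (x + (ai / 2) • θi - (aj / 2) • θj) + g (x - (ai / 2) • θi - (aj / 2) • θj)) :
    ∀ x : ℝ × ℝ,
      gm x = -(deriv (fun h : ℝ => conv (x + h • (θi + θj))) 0) / |det2 θi θj| := by
  intro x
  have hDpos : 0 < |det2 θi θj| := abs_pos.mpr hdet
  have hθi0 : θi ≠ 0 := by
    intro h0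
    rw [h0] at hθi
    norm_num at hθi
  have hθj0 : θj ≠ 0 := by
    intro h0
    rw [h0] at hθj
    norm_num at hθj
  have hΦc : Continuous fun q : ℝ × ℝ => PhiD θi θj μ x (aj/2) q.1 q.2 :=
    PhiD_cont θi θj x hμc (aj/2)
  -- the common derivative value
  set S : ℝ := qqD θi θj μ x (ai/2) (aj/2) - qqD θi θj μ x (ai/2) (-(aj/2)) +
      PhiD θi θj μ x (aj/2) (ai/2) 0 - PhiD θi θj μ x (aj/2) (-(ai/2)) 0 with hS
  -- STEP I : the gm side
  have dI : ∀ δ : ℝ, cbt μ θi (x + (ai/2) • θi + δ • θj) - cbt μ θi (x + (-(ai/2)) • θi + δ • θj)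
      = -∫ s in (-(ai/2))..(ai/2), μ (x + s • θi + δ • θj) := by
    intro δ
    have h := cbt_diff hμc hμsupp (x + δ • θj) θi hθi0 (ai/2) (-(ai/2))
    have e1 : ∀ c : ℝ, (x + δ • θj) + c • θi = x + c • θi + δ • θj := fun c => by abel
    simp_rw [e1] at h
    exact h
  have dJ : ∀ ε : ℝ, cbt μ θj (x + ε • θi + (aj/2) • θj) - cbt μ θj (x + ε • θi + (-(aj/2)) • θj)
      = -∫ t in (-(aj/2))..(aj/2), μ (x + ε • θi + t • θj) := by
    intro ε
    exact cbt_diff hμc hμsupp (x + ε • θi) θj hθj0 (aj/2) (-(aj/2))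
  have hgmx : gm x = -S := by
    rw [hgm, hg]
    simp only [sub_eq_add_neg, ← neg_smul]
    show brt μ θi θj (x + (ai/2) • θi + (aj/2) • θj) +
        -(brt μ θi θj (x + (-(ai/2)) • θi + (aj/2) • θj)) +
        -(brt μ θi θj (x + (ai/2) • θi + (-(aj/2)) • θj)) +
        brt μ θi θj (x + (-(ai/2)) • θi + (-(aj/2)) • θj) = -S
    unfold brt
    have eI1 := dI (aj/2)
    have eI2 := dI (-(aj/2))
    have eJ1 := dJ (ai/2)
    have eJ2 := dJ (-(ai/2))
    have hq1 : qqD θi θj μ x (ai/2) (aj/2) = ∫ s in (-(ai/2))..(ai/2),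
        μ (x + s • θi + (aj/2) • θj) := rfl
    have hq2 : qqD θi θj μ x (ai/2) (-(aj/2)) = ∫ s in (-(ai/2))..(ai/2),
        μ (x + s • θi + (-(aj/2)) • θj) := rfl
    have hp1 : PhiD θi θj μ x (aj/2) (ai/2) 0 = ∫ t in (-(aj/2))..(aj/2),
        μ (x + (ai/2) • θi + t • θj) := by
      unfold PhiD ffD
      rw [zero_sub, zero_add]
    have hp2 : PhiD θi θj μ x (aj/2) (-(ai/2)) 0 = ∫ t in (-(aj/2))..(aj/2),
        μ (x + (-(ai/2)) • θi + t • θj) := by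
      unfold PhiD ffD
      rw [zero_sub, zero_add]
    rw [hS, hq1, hq2, hp1, hp2]
    linarith [eI1, eI2, eJ1, eJ2]
  -- STEP II : the derivative side
  -- reindexing of the convolution formula
  have reindex : ∀ h : ℝ, (∫ s in (-(ai/2))..(ai/2), ∫ t in (-(aj/2))..(aj/2),
      μ ((x + h • (θi + θj)) - s • θi - t • θj)) =
      ∫ s in (h - ai/2)..(h + ai/2), PhiD θi θj μ x (aj/2) s h := by
    intro h
    have e : ∀ s t : ℝ, (x + h • (θi + θj)) - s • θi - t • θj
        = x + (h - s) • θi + (h - t) • θj := by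
      intro s t
      simp only [smul_add, sub_smul]
      abel
    simp_rw [e]
    have inner : ∀ s : ℝ, (∫ t in (-(aj/2))..(aj/2), μ (x + (h - s) • θi + (h - t) • θj))
        = PhiD θi θj μ x (aj/2) (h - s) h := by
      intro s
      unfold PhiD ffD
      rw [intervalIntegral.integral_comp_sub_left
        (fun t => μ (x + (h - s) • θi + t • θj)) h, sub_neg_eq_add]
    simp_rw [inner]
    rw [intervalIntegral.integral_comp_sub_left
      (fun s => PhiD θi θj μ x (aj/2) s h) h, sub_neg_eq_add]
  -- splitting of the moving integral
  have Tsplit : ∀ h : ℝ, (∫ s in (h - ai/2)..(h + ai/2), PhiD θi θj μ x (aj/2) s h) =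
      (-∫ s in (-(ai/2))..(h - ai/2), PhiD θi θj μ x (aj/2) s h) +
      (∫ s in (-(ai/2))..(ai/2), PhiD θi θj μ x (aj/2) s h) +
      ∫ s in (ai/2)..(h + ai/2), PhiD θi θj μ x (aj/2) s h := by
    intro h
    have hc : Continuous fun s => PhiD θi θj μ x (aj/2) s h :=
      Continuous.comp (f := fun s : ℝ => (s, h)) hΦc (continuous_id.prodMk continuous_const)
    have hci : ∀ c₁ c₂ : ℝ, IntervalIntegrable (fun s => PhiD θi θj μ x (aj/2) s h)
        volume c₁ c₂ := fun c₁ c₂ => hc.intervalIntegrable c₁ c₂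
    have i1 := intervalIntegral.integral_add_adjacent_intervals
      (hci (h - ai/2) (-(ai/2))) (hci (-(ai/2)) (ai/2))
    have i2 := intervalIntegral.integral_add_adjacent_intervals
      (hci (h - ai/2) (ai/2)) (hci (ai/2) (h + ai/2))
    have i3 : (∫ s in (h - ai/2)..(-(ai/2)), PhiD θi θj μ x (aj/2) s h) =
        -∫ s in (-(ai/2))..(h - ai/2), PhiD θi θj μ x (aj/2) s h :=
      intervalIntegral.integral_symm _ _
    linarith [i1, i2]
  -- Fubini piece: A as a primitive
  have Aeq : ∀ h : ℝ, (∫ s in (-(ai/2))..(ai/2), PhiD θi θj μ x (aj/2) s h) =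
      QQD θi θj μ x (ai/2) (h + aj/2) - QQD θi θj μ x (ai/2) (h - aj/2) := by
    intro h
    have hq : Continuous (qqD θi θj μ x (ai/2)) := qqD_cont θi θj x hμc (ai/2)
    unfold PhiD QQD
    rw [my_swap (F := ffD θi θj μ x) (ffD_cont θi θj x hμc) (-(ai/2)) (ai/2) (h - aj/2) (h + aj/2)]
    rw [intervalIntegral.integral_interval_sub_left (hq.intervalIntegrable _ _)
      (hq.intervalIntegrable _ _)]
    rfl
  -- the three derivative pieces
  have HA : HasDerivAt (fun h : ℝ => ∫ s in (-(ai/2))..(ai/2), PhiD θi θj μ x (aj/2) s h)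
      (qqD θi θj μ x (ai/2) (aj/2) - qqD θi θj μ x (ai/2) (-(aj/2))) 0 := by
    rw [funext Aeq]
    have h1 : HasDerivAt (fun h : ℝ => QQD θi θj μ x (ai/2) (h + aj/2))
        (qqD θi θj μ x (ai/2) (aj/2)) 0 := by
      have := (QQD_deriv θi θj x hμc (ai/2) (0 + aj/2)).comp 0
        ((hasDerivAt_id 0).add_const (aj/2))
      simpa [Function.comp_def] using this
    have h2 : HasDerivAt (fun h : ℝ => QQD θi θj μ x (ai/2) (h - aj/2))
        (qqD θi θj μ x (ai/2) (-(aj/2))) 0 := by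
      have := (QQD_deriv θi θj x hμc (ai/2) (0 - aj/2)).comp 0
        ((hasDerivAt_id 0).sub_const (aj/2))
      simpa [Function.comp_def] using this
    exact h1.sub h2
  have HB : HasDerivAt (fun h : ℝ => ∫ s in (ai/2)..(h + ai/2), PhiD θi θj μ x (aj/2) s h)
      (PhiD θi θj μ x (aj/2) (ai/2) 0) 0 := deriv_moving hΦc (ai/2)
  have HC : HasDerivAt (fun h : ℝ => ∫ s in (-(ai/2))..(h - ai/2), PhiD θi θj μ x (aj/2) s h)
      (PhiD θi θj μ x (aj/2) (-(ai/2)) 0) 0 := by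
    have := deriv_moving hΦc (-(ai/2))
    simp only [← sub_eq_add_neg] at this
    exact this
  have Hsum : HasDerivAt (fun h : ℝ =>
      (-∫ s in (-(ai/2))..(h - ai/2), PhiD θi θj μ x (aj/2) s h) +
      (∫ s in (-(ai/2))..(ai/2), PhiD θi θj μ x (aj/2) s h) +
      ∫ s in (ai/2)..(h + ai/2), PhiD θi θj μ x (aj/2) s h)
      ((-(PhiD θi θj μ x (aj/2) (-(ai/2)) 0)) +
        (qqD θi θj μ x (ai/2) (aj/2) - qqD θi θj μ x (ai/2) (-(aj/2))) +
        PhiD θi θj μ x (aj/2) (ai/2) 0) 0 := (HC.neg.add HA).add HB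
  have hfun : (fun h : ℝ => conv (x + h • (θi + θj))) = fun h : ℝ => |det2 θi θj| *
      ((-∫ s in (-(ai/2))..(h - ai/2), PhiD θi θj μ x (aj/2) s h) +
      (∫ s in (-(ai/2))..(ai/2), PhiD θi θj μ x (aj/2) s h) +
      ∫ s in (ai/2)..(h + ai/2), PhiD θi θj μ x (aj/2) s h) := by
    funext h
    rw [hconv]
    show (∫ y : ℝ × ℝ, μ y * p ((x + h • (θi + θj)) - y)) = _
    rw [conv_formula hμc hμsupp hdet hai haj hbi hbj hp (x + h • (θi + θj)),
      reindex h, Tsplit h]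
  have Hder : HasDerivAt (fun h : ℝ => conv (x + h • (θi + θj)))
      (|det2 θi θj| * ((-(PhiD θi θj μ x (aj/2) (-(ai/2)) 0)) +
        (qqD θi θj μ x (ai/2) (aj/2) - qqD θi θj μ x (ai/2) (-(aj/2))) +
        PhiD θi θj μ x (aj/2) (ai/2) 0)) 0 := by
    rw [hfun]
    exact Hsum.const_mul _
  rw [hgmx, Hder.deriv]
  rw [hS]
  field_simp
  ring
end
end
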